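/- arXiv:1004.0121 — 4 statements merged into one kernel-verified Lean document; each statement's English description precedes it below -/
import Mathlib

section
/- For functions f, g : (0,1] → ℝ with |f(r)| ≤ C₁ r^a (1-r)^{b-1} and |g(r)| ≤ C₂ r^c (1-r)^{d-1} on (0,1), where a, c ≥ 0, b, d > 0, and a ≠ c, the Mellin convolution (f*g)(r) = ∫_r^1 f(r/t) g(t) dt/t satisfies |(f*g)(r)| ≤ C r^{min(a,c)} (1-r)^{b+d-1} for some constant C and all r ∈ (0,1). -/
/-!
Substituting `t = r + (1 - r) s` pulls out the factor `(1 - r) ^ (b + d - 1)` exactly and bounds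
`|mellinConv f g r|` by `C₁ C₂ r ^ a (1 - r) ^ (b + d - 1)` times the integral over `s ∈ (0, 1)` of
`u ^ (c - a - b) s ^ (b - 1) (1 - s) ^ (d - 1)`, where `u = r + (1 - r) s`. Since
`max r s ≤ u ≤ 2 max r s`, splitting at `s = 1/2` bounds this integrand by a constant times
`max r s ^ (c - a - b) s ^ (b - 1) + (1 - s) ^ (d - 1)`, and
`∫₀¹ max r s ^ (c - a - b) s ^ (b - 1) ds = r ^ (c - a) / b + (1 - r ^ (c - a)) / (c - a)`,
which is `O(r ^ min 0 (c - a))` because `a ≠ c` (for `a = c` a factor `log (1 / r)` appears).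
-/

open MeasureTheory Set Real intervalIntegral

noncomputable def mellinConv (f g : ℝ → ℝ) (r : ℝ) : ℝ :=
  ∫ t in Set.Ioc r 1, f (r / t) * g t / t

lemma rpow_le_two_rpow_abs {x p : ℝ} (hx : 1 / 2 ≤ x) (hx' : x ≤ 2) : x ^ p ≤ 2 ^ |p| := by
  rcases le_total 0 p with hp | hp
  · rw [abs_of_nonneg hp]
    exact rpow_le_rpow (by linarith) hx' hp
  · calc x ^ p ≤ (1 / 2) ^ p := rpow_le_rpow_of_nonpos (by norm_num) hx hp
      _ = 2 ^ |p| := by rw [abs_of_nonpos hp, one_div, inv_rpow zero_le_two, rpow_neg zero_le_two]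

lemma rpow_le_two_rpow_abs_mul {x M p : ℝ} (hM : 0 < M) (hx : M ≤ x) (hx' : x ≤ 2 * M) :
    x ^ p ≤ 2 ^ |p| * M ^ p := by
  have hxM : 1 / 2 ≤ x / M ∧ x / M ≤ 2 := by
    constructor
    · rw [le_div_iff₀ hM]; linarith
    · rw [div_le_iff₀ hM]; linarith
  calc x ^ p = (x / M) ^ p * M ^ p := by
        rw [← mul_rpow (by linarith) hM.le, div_mul_cancel₀ _ hM.ne']
    _ ≤ 2 ^ |p| * M ^ p := by
        gcongr
        exact rpow_le_two_rpow_abs hxM.1 hxM.2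

lemma max_le_add_one_sub_mul {r s : ℝ} (hr0 : 0 ≤ r) (hr1 : r ≤ 1) (hs0 : 0 ≤ s) (hs1 : s ≤ 1) :
    max r s ≤ r + (1 - r) * s := by
  apply max_le <;> nlinarith

lemma add_one_sub_mul_le_two_mul_max {r s : ℝ} (hr : 0 ≤ r) (hs : 0 ≤ s) :
    r + (1 - r) * s ≤ 2 * max r s := by
  nlinarith [le_max_left r s, le_max_right r s]

/-- After the substitution `t = r + (1 - r) s`, the Mellin convolution of `r ^ a (1 - r) ^ (b - 1)`
and `r ^ c (1 - r) ^ (d - 1)` is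
`r ^ a (1 - r) ^ (b + d - 1) ∫₀¹ mellinKernel (c - a - b) b d r s ds`. -/
noncomputable def mellinKernel (e b d r s : ℝ) : ℝ :=
  (r + (1 - r) * s) ^ e * s ^ (b - 1) * (1 - s) ^ (d - 1)

lemma mellinKernel_le (e b d : ℝ) {r s : ℝ} (hr : r ∈ Ioo (0:ℝ) 1) (hs : s ∈ Ioo (0:ℝ) 1) :
    mellinKernel e b d r s ≤
      2 ^ |e| * 2 ^ |b - 1| * 2 ^ |d - 1| * (max r s ^ e * s ^ (b - 1) + (1 - s) ^ (d - 1)) := by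
  obtain ⟨hr0, hr1⟩ := hr
  obtain ⟨hs0, hs1⟩ := hs
  have hM : 0 < max r s := lt_max_of_lt_left hr0
  have hu := max_le_add_one_sub_mul hr0.le hr1.le hs0.le hs1.le
  have hu' := add_one_sub_mul_le_two_mul_max hr0.le hs0.le
  have h1 : (1:ℝ) ≤ 2 ^ |e| := one_le_rpow one_le_two (abs_nonneg _)
  have h2 : (1:ℝ) ≤ 2 ^ |b - 1| := one_le_rpow one_le_two (abs_nonneg _)
  have h3 : (1:ℝ) ≤ 2 ^ |d - 1| := one_le_rpow one_le_two (abs_nonneg _)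
  have hA : 0 ≤ max r s ^ e * s ^ (b - 1) := by positivity
  have hB : 0 ≤ (1 - s) ^ (d - 1) := rpow_nonneg (by linarith) _
  unfold mellinKernel
  rcases le_total s (1 / 2) with hs_small | hs_large
  · have hu_le : (r + (1 - r) * s) ^ e ≤ 2 ^ |e| * max r s ^ e :=
      rpow_le_two_rpow_abs_mul hM hu hu'
    have hs_le : (1 - s) ^ (d - 1) ≤ 2 ^ |d - 1| := rpow_le_two_rpow_abs (by linarith) (by linarith)
    calc (r + (1 - r) * s) ^ e * s ^ (b - 1) * (1 - s) ^ (d - 1)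
        ≤ 2 ^ |e| * max r s ^ e * s ^ (b - 1) * 2 ^ |d - 1| := by gcongr
      _ ≤ 2 ^ |e| * 2 ^ |b - 1| * 2 ^ |d - 1| * (max r s ^ e * s ^ (b - 1)) := by
        nlinarith [mul_nonneg (mul_nonneg (by linarith : (0:ℝ) ≤ 2 ^ |e|) hA)
          (by linarith : (0:ℝ) ≤ 2 ^ |d - 1|)]
      _ ≤ _ := mul_le_mul_of_nonneg_left (le_add_of_nonneg_right hB) (by positivity)
  · have hu_le : (r + (1 - r) * s) ^ e ≤ 2 ^ |e| :=
      rpow_le_two_rpow_abs (by linarith [le_max_right r s]) (by nlinarith)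
    have hs_le : s ^ (b - 1) ≤ 2 ^ |b - 1| := rpow_le_two_rpow_abs hs_large (by linarith)
    calc (r + (1 - r) * s) ^ e * s ^ (b - 1) * (1 - s) ^ (d - 1)
        ≤ 2 ^ |e| * 2 ^ |b - 1| * (1 - s) ^ (d - 1) := by gcongr
      _ ≤ 2 ^ |e| * 2 ^ |b - 1| * 2 ^ |d - 1| * (1 - s) ^ (d - 1) := by
        nlinarith [mul_nonneg (mul_nonneg (zero_le_one.trans h1) (zero_le_one.trans h2)) hB]
      _ ≤ _ := mul_le_mul_of_nonneg_left (le_add_of_nonneg_left hA) (by positivity)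

lemma intervalIntegrable_max_rpow_mul_rpow {r e b : ℝ} (hr : 0 < r) (hb : 0 < b) (x y : ℝ) :
    IntervalIntegrable (fun s => max r s ^ e * s ^ (b - 1)) volume x y :=
  (intervalIntegrable_rpow' (by linarith)).continuousOn_mul <|
    (continuous_const.max continuous_id).continuousOn.rpow_const fun _ _ =>
      Or.inl (lt_max_of_lt_left hr).ne'

lemma integral_max_rpow_mul_rpow {r e b : ℝ} (hr0 : 0 < r) (hr1 : r ≤ 1) (hb : 0 < b)
    (heb : e + b ≠ 0) :
    ∫ s in (0:ℝ)..1, max r s ^ e * s ^ (b - 1) = r ^ (e + b) / b + (1 - r ^ (e + b)) / (e + b) := by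
  have hI := intervalIntegrable_max_rpow_mul_rpow (e := e) hr0 hb
  have h_left : ∫ s in (0:ℝ)..r, max r s ^ e * s ^ (b - 1) = ∫ s in (0:ℝ)..r, r ^ e * s ^ (b - 1) :=
    integral_congr fun s hs => by
      rw [uIcc_of_le hr0.le] at hs
      simp only [max_eq_left hs.2]
  have h_right : ∫ s in r..1, max r s ^ e * s ^ (b - 1) = ∫ s in r..1, s ^ (e + b - 1) :=
    integral_congr fun s hs => by
      rw [uIcc_of_le hr1] at hs
      simp only [max_eq_right hs.1]
      rw [← rpow_add (hr0.trans_le hs.1)]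
      ring_nf
  have h0 : (0:ℝ) ∉ uIcc r 1 := by
    rw [uIcc_of_le hr1]
    exact fun h => hr0.not_ge h.1
  rw [← integral_add_adjacent_intervals (hI 0 r) (hI r 1), h_left, h_right,
    intervalIntegral.integral_const_mul, integral_rpow (Or.inl (by linarith)),
    integral_rpow (Or.inr ⟨by contrapose! heb; linarith, h0⟩),
    sub_add_cancel, sub_add_cancel, zero_rpow hb.ne', one_rpow, rpow_add hr0]
  ring

lemma integral_max_rpow_mul_rpow_le {r e b : ℝ} (hr0 : 0 < r) (hr1 : r ≤ 1) (hb : 0 < b)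
    (heb : e + b ≠ 0) :
    ∫ s in (0:ℝ)..1, max r s ^ e * s ^ (b - 1) ≤ (1 / b + 1 / |e + b|) * r ^ min 0 (e + b) := by
  rw [integral_max_rpow_mul_rpow hr0 hr1 hb heb]
  rcases heb.lt_or_gt with heb | heb
  · have hr : 1 ≤ r ^ (e + b) := one_le_rpow_of_pos_of_le_one_of_nonpos hr0 hr1 heb.le
    rw [min_eq_right heb.le, abs_of_neg heb, show (1 - r ^ (e + b)) / (e + b)
      = (r ^ (e + b) - 1) / -(e + b) by rw [div_neg, ← neg_div, neg_sub]]
    calc r ^ (e + b) / b + (r ^ (e + b) - 1) / -(e + b)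
        ≤ r ^ (e + b) / b + r ^ (e + b) / -(e + b) := by gcongr; linarith; linarith
      _ = (1 / b + 1 / -(e + b)) * r ^ (e + b) := by ring
  · have hr : r ^ (e + b) ≤ 1 := rpow_le_one hr0.le hr1 heb.le
    have hr' : 0 ≤ r ^ (e + b) := rpow_nonneg hr0.le _
    rw [min_eq_left heb.le, abs_of_pos heb, rpow_zero, mul_one]
    gcongr
    linarith

lemma intervalIntegrable_one_sub_rpow {d : ℝ} (hd : 0 < d) :
    IntervalIntegrable (fun s => (1 - s) ^ (d - 1)) volume 0 1 := by
  simpa using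
    (intervalIntegrable_rpow' (a := 1) (b := 0) (r := d - 1) (by linarith)).comp_sub_left 1

lemma integral_one_sub_rpow {d : ℝ} (hd : 0 < d) : ∫ s in (0:ℝ)..1, (1 - s) ^ (d - 1) = 1 / d := by
  rw [intervalIntegral.integral_comp_sub_left (fun s => s ^ (d - 1)),
    integral_rpow (Or.inl (by linarith))]
  simp [zero_rpow hd.ne']

section
variable {e b d r : ℝ}

lemma intervalIntegrable_mellinKernel_bound (hb : 0 < b) (hd : 0 < d) (hr : 0 < r) :
    IntervalIntegrable (fun s => 2 ^ |e| * 2 ^ |b - 1| * 2 ^ |d - 1| *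
      (max r s ^ e * s ^ (b - 1) + (1 - s) ^ (d - 1))) volume 0 1 :=
  ((intervalIntegrable_max_rpow_mul_rpow hr hb 0 1).add
    (intervalIntegrable_one_sub_rpow hd)).const_mul _

lemma mellinKernel_nonneg (e b d : ℝ) {r s : ℝ} (hr : r ∈ Icc (0:ℝ) 1) (hs : s ∈ Icc (0:ℝ) 1) :
    0 ≤ mellinKernel e b d r s :=
  mul_nonneg (mul_nonneg (rpow_nonneg (by nlinarith [hr.1, hr.2, hs.1]) _) (rpow_nonneg hs.1 _))
    (rpow_nonneg (sub_nonneg.2 hs.2) _)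

lemma intervalIntegrable_mellinKernel (hb : 0 < b) (hd : 0 < d) (hr : r ∈ Ioo (0:ℝ) 1) :
    IntervalIntegrable (mellinKernel e b d r) volume 0 1 := by
  refine (intervalIntegrable_mellinKernel_bound (e := e) hb hd hr.1).mono_fun' ?_ ?_
  · unfold mellinKernel; fun_prop
  · rw [uIoc_of_le zero_le_one]
    filter_upwards [ae_restrict_mem measurableSet_Ioc, ae_restrict_of_ae (volume.ae_ne 1)]
      with s hs hs1
    have hs' : s ∈ Ioo (0:ℝ) 1 := ⟨hs.1, lt_of_le_of_ne hs.2 hs1⟩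
    rw [Real.norm_of_nonneg
      (mellinKernel_nonneg e b d (Ioo_subset_Icc_self hr) (Ioc_subset_Icc_self hs))]
    exact mellinKernel_le e b d hr hs'

lemma integral_mellinKernel_le (hb : 0 < b) (hd : 0 < d) (heb : e + b ≠ 0) (hr : r ∈ Ioo (0:ℝ) 1) :
    ∫ s in (0:ℝ)..1, mellinKernel e b d r s ≤
      2 ^ |e| * 2 ^ |b - 1| * 2 ^ |d - 1| * (1 / b + 1 / |e + b| + 1 / d) * r ^ min 0 (e + b) := by
  have hrm : 1 ≤ r ^ min 0 (e + b) :=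
    one_le_rpow_of_pos_of_le_one_of_nonpos hr.1 hr.2.le (min_le_left _ _)
  calc ∫ s in (0:ℝ)..1, mellinKernel e b d r s
      ≤ ∫ s in (0:ℝ)..1, 2 ^ |e| * 2 ^ |b - 1| * 2 ^ |d - 1| *
          (max r s ^ e * s ^ (b - 1) + (1 - s) ^ (d - 1)) :=
        integral_mono_on_of_le_Ioo zero_le_one (intervalIntegrable_mellinKernel hb hd hr)
          (intervalIntegrable_mellinKernel_bound hb hd hr.1) fun s hs => mellinKernel_le e b d hr hs
    _ = 2 ^ |e| * 2 ^ |b - 1| * 2 ^ |d - 1| *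
          ((∫ s in (0:ℝ)..1, max r s ^ e * s ^ (b - 1)) + 1 / d) := by
        rw [intervalIntegral.integral_const_mul, integral_add
          (intervalIntegrable_max_rpow_mul_rpow hr.1 hb 0 1) (intervalIntegrable_one_sub_rpow hd),
          integral_one_sub_rpow hd]
    _ ≤ 2 ^ |e| * 2 ^ |b - 1| * 2 ^ |d - 1| *
          ((1 / b + 1 / |e + b|) * r ^ min 0 (e + b) + 1 / d * r ^ min 0 (e + b)) := by
        gcongr
        · exact integral_max_rpow_mul_rpow_le hr.1 hr.2.le hb heb
        · exact le_mul_of_one_le_right (by positivity) hrm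
    _ = _ := by ring
end

/-- `f` is of type `(a, b)` with constant `C`. -/
def IsOfTypeWith (C a b : ℝ) (f : ℝ → ℝ) : Prop :=
  ∀ r ∈ Ioo (0:ℝ) 1, |f r| ≤ C * r ^ a * (1 - r) ^ (b - 1)

namespace IsOfTypeWith

variable {f g : ℝ → ℝ} {a b c d C₁ C₂ : ℝ}

lemma nonneg (hf : IsOfTypeWith C₁ a b f) : 0 ≤ C₁ := by
  have h := (abs_nonneg _).trans (hf (1 / 2) ⟨by norm_num, by norm_num⟩)
  rw [mul_assoc] at h
  exact (mul_nonneg_iff_of_pos_right (by positivity)).1 h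

lemma abs_mul_div_le (hf : IsOfTypeWith C₁ a b f) (hg : IsOfTypeWith C₂ c d g) {r t : ℝ}
    (hr : 0 < r) (hrt : r < t) (ht : t < 1) :
    |f (r / t) * g t / t| ≤
      C₁ * C₂ * r ^ a * (t ^ (c - a - b) * (t - r) ^ (b - 1) * (1 - t) ^ (d - 1)) := by
  have ht0 : 0 < t := hr.trans hrt
  have hft := hf (r / t) ⟨div_pos hr ht0, (div_lt_one ht0).2 hrt⟩
  have hgt := hg t ⟨ht0, ht⟩
  have ht_pow : t ^ (c - a - b) * t ^ a * t ^ (b - 1) * t = t ^ c := by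
    rw [← rpow_add ht0, ← rpow_add ht0, ← rpow_add_one ht0.ne']
    ring_nf
  rw [abs_div, abs_mul, abs_of_pos ht0]
  calc |f (r / t)| * |g t| / t
      ≤ C₁ * (r / t) ^ a * (1 - r / t) ^ (b - 1) * (C₂ * t ^ c * (1 - t) ^ (d - 1)) / t := by
        gcongr
        exact (abs_nonneg _).trans hft
    _ = _ := by
        rw [← ht_pow, one_sub_div ht0.ne', div_rpow hr.le ht0.le, div_rpow (by linarith) ht0.le]
        have : t ^ a ≠ 0 := by positivity
        have : t ^ (b - 1) ≠ 0 := by positivity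
        field_simp

lemma abs_mellinConv_le {r : ℝ} (hf : IsOfTypeWith C₁ a b f) (hg : IsOfTypeWith C₂ c d g)
    (hb : 0 < b) (hd : 0 < d) (hr : r ∈ Ioo (0:ℝ) 1) :
    |mellinConv f g r| ≤ C₁ * C₂ * r ^ a * (1 - r) ^ (b + d - 1) *
      ∫ s in (0:ℝ)..1, mellinKernel (c - a - b) b d r s := by
  obtain ⟨hr0, hr1⟩ := hr
  have h1r : 0 < 1 - r := by linarith
  have hsubst : mellinConv f g r = (1 - r) * ∫ s in (0:ℝ)..1,
      f (r / (r + (1 - r) * s)) * g (r + (1 - r) * s) / (r + (1 - r) * s) := by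
    rw [mellinConv, ← intervalIntegral.integral_of_le hr1.le, ← smul_eq_mul,
      smul_integral_comp_add_mul (fun t => f (r / t) * g t / t)]
    simp
  rw [hsubst, abs_mul, abs_of_pos h1r, ← Real.norm_eq_abs]
  calc (1 - r) * ‖∫ s in (0:ℝ)..1,
        f (r / (r + (1 - r) * s)) * g (r + (1 - r) * s) / (r + (1 - r) * s)‖
      ≤ (1 - r) * ∫ s in (0:ℝ)..1,
          C₁ * C₂ * r ^ a * (1 - r) ^ (b - 1 + (d - 1)) * mellinKernel (c - a - b) b d r s := by
        gcongr
        refine norm_integral_le_of_norm_le zero_le_one ?_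
          ((intervalIntegrable_mellinKernel hb hd ⟨hr0, hr1⟩).const_mul _)
        filter_upwards [volume.ae_ne 1] with s hs1 hs
        have hs' : s < 1 := lt_of_le_of_ne hs.2 hs1
        refine (hf.abs_mul_div_le hg hr0 (by nlinarith [hs.1]) (by nlinarith)).trans_eq ?_
        rw [show r + (1 - r) * s - r = (1 - r) * s by ring,
          show 1 - (r + (1 - r) * s) = (1 - r) * (1 - s) by ring,
          mul_rpow h1r.le hs.1.le, mul_rpow h1r.le (by linarith), rpow_add h1r, mellinKernel]
        ring
    _ = _ := by
        rw [intervalIntegral.integral_const_mul, show b + d - 1 = b - 1 + (d - 1) + 1 by ring,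
          rpow_add_one h1r.ne']
        ring

end IsOfTypeWith

theorem mellinConv_type_of_ne_general (f g : ℝ → ℝ) (a b c d C₁ C₂ : ℝ)
    (hb : 0 < b) (hd : 0 < d) (hac : a ≠ c)
    (hf : ∀ r ∈ Set.Ioo (0:ℝ) 1, |f r| ≤ C₁ * r ^ a * (1 - r) ^ (b - 1))
    (hg : ∀ r ∈ Set.Ioo (0:ℝ) 1, |g r| ≤ C₂ * r ^ c * (1 - r) ^ (d - 1)) :
    ∃ C : ℝ, ∀ r ∈ Set.Ioo (0:ℝ) 1,
      |mellinConv f g r| ≤ C * r ^ (min a c) * (1 - r) ^ (b + d - 1) := by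
  refine ⟨C₁ * C₂ * (2 ^ |c - a - b| * 2 ^ |b - 1| * 2 ^ |d - 1| * (1 / b + 1 / |c - a| + 1 / d)),
    fun r hr => ?_⟩
  have hK := integral_mellinKernel_le (e := c - a - b) hb hd
    (by rwa [sub_add_cancel, sub_ne_zero, ne_comm]) hr
  rw [sub_add_cancel] at hK
  have hmin : a + min 0 (c - a) = min a c := by rw [← min_add_add_left]; simp
  have hprefactor : 0 ≤ C₁ * C₂ * r ^ a * (1 - r) ^ (b + d - 1) :=
    mul_nonneg (mul_nonneg (mul_nonneg (IsOfTypeWith.nonneg hf) (IsOfTypeWith.nonneg hg))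
      (rpow_nonneg hr.1.le _)) (rpow_nonneg (sub_nonneg.2 hr.2.le) _)
  calc |mellinConv f g r|
      ≤ C₁ * C₂ * r ^ a * (1 - r) ^ (b + d - 1) *
          ∫ s in (0:ℝ)..1, mellinKernel (c - a - b) b d r s :=
        IsOfTypeWith.abs_mellinConv_le hf hg hb hd hr
    _ ≤ _ := mul_le_mul_of_nonneg_left hK hprefactor
    _ = _ := by rw [← hmin, rpow_add hr.1]; ring

/-- Lemma A, case `a ≠ c`: the Mellin convolution of a function of type `(a,b)`
with a function of type `(c,d)` is of type `(min a c, b + d)`. -/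
theorem mellinConv_type_of_ne (f g : ℝ → ℝ) (a b c d C₁ C₂ : ℝ)
    (ha : 0 ≤ a) (hc : 0 ≤ c) (hb : 0 < b) (hd : 0 < d) (hac : a ≠ c)
    (hf : ∀ r ∈ Set.Ioo (0:ℝ) 1, |f r| ≤ C₁ * r ^ a * (1 - r) ^ (b - 1))
    (hg : ∀ r ∈ Set.Ioo (0:ℝ) 1, |g r| ≤ C₂ * r ^ c * (1 - r) ^ (d - 1)) :
    ∃ C : ℝ, ∀ r ∈ Set.Ioo (0:ℝ) 1,
      |mellinConv f g r| ≤ C * r ^ (min a c) * (1 - r) ^ (b + d - 1) :=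
  mellinConv_type_of_ne_general f g a b c d C₁ C₂ hb hd hac hf hg
end

section
/- Let f_i(r) = r^{a_i}(1-r)^{b_i - 1} for 1 ≤ i ≤ n with all a_i ≥ 0, b_i > 0, and let h be their iterated Mellin convolution h = f_1 * f_2 * ⋯ * f_n. Then |h(r)| ≤ C r^α (1-r)^{β-1} (ln(e/r))^{n-1} for all r ∈ (0,1), where α = min_i a_i and β = Σ_i b_i. -/
open MeasureTheory Set

/-- The iterated Mellin convolution `f 0 * f 1 * ⋯ * f n` (of `n + 1` functions). -/
noncomputable def iterConv (f : ℕ → ℝ → ℝ) : ℕ → ℝ → ℝ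
  | 0 => f 0
  | n + 1 => mellinConv (iterConv f n) (f (n + 1))

/-!
Induct on the number of factors. If `|g x| ≤ C x ^ α (1 - x) ^ (β - 1) log (e / x) ^ n`, the
integrand of `g * f` with `f t = t ^ a (1 - t) ^ (b - 1)` is at most
`C r ^ min α a log (e / r) ^ n` times `(1 - r / t) ^ (β - 1) (1 - t) ^ (b - 1) / t`, whose
integral is the Mellin convolution of `(1 - x) ^ (β - 1)` and `(1 - x) ^ (b - 1)`. Since
`(1 - r / t) + (1 - t) ≥ 1 - r`, one of the two factors is comparable to `1 - r`; this reduces the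
kernel to the one-variable integrals `∫_r^1 (1 - t) ^ (p - 1) dt / t` (after the substitution
`t ↦ r / t`, which preserves `dt / t`), and these are at most `(1 - r) ^ p (1 / p - log r)`.
-/

open Real

lemma log_exp_one_div {r : ℝ} (hr : 0 < r) : log (exp 1 / r) = 1 - log r := by
  rw [log_div (exp_ne_zero 1) hr.ne', log_exp]

lemma one_le_log_exp_one_div {r : ℝ} (hr : 0 < r) (hr1 : r ≤ 1) : 1 ≤ log (exp 1 / r) := by
  rw [log_exp_one_div hr]
  linarith [log_nonpos hr.le hr1]

lemma rpow_le_two_rpow_abs_mul_rpow {u v : ℝ} (hu : 0 < u) (huv : u ≤ v) (hvu : v ≤ 2 * u)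
    (p : ℝ) : u ^ p ≤ 2 ^ |p| * v ^ p := by
  rcases le_total 0 p with hp | hp
  · calc u ^ p ≤ v ^ p := rpow_le_rpow hu.le huv hp
      _ ≤ 2 ^ |p| * v ^ p :=
        le_mul_of_one_le_left (rpow_nonneg (hu.le.trans huv) p)
          (one_le_rpow one_le_two (abs_nonneg p))
  · calc u ^ p ≤ (v / 2) ^ p := rpow_le_rpow_of_nonpos (by linarith) (by linarith) hp
      _ = 2 ^ |p| * v ^ p := by
        rw [div_rpow (by linarith) zero_le_two, abs_of_nonpos hp, rpow_neg zero_le_two,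
          div_eq_mul_inv, mul_comm]

lemma rpow_mul_rpow_le_add {x y c : ℝ} (hx : 0 ≤ x) (hy : 0 ≤ y) (hc : 0 < c) (hxc : x ≤ c)
    (hyc : y ≤ c) (hcxy : c ≤ x + y) (p q : ℝ) :
    x ^ p * y ^ q ≤ 2 ^ |q| * c ^ q * x ^ p + 2 ^ |p| * c ^ p * y ^ q := by
  have hxp : 0 ≤ x ^ p := rpow_nonneg hx p
  have hyq : 0 ≤ y ^ q := rpow_nonneg hy q
  rcases le_total (c / 2) y with hy2 | hx2
  · have hy' := rpow_le_two_rpow_abs_mul_rpow (by linarith) hyc (by linarith) q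
    calc x ^ p * y ^ q ≤ x ^ p * (2 ^ |q| * c ^ q) := mul_le_mul_of_nonneg_left hy' hxp
      _ = 2 ^ |q| * c ^ q * x ^ p := mul_comm _ _
      _ ≤ _ := le_add_of_nonneg_right (mul_nonneg (by positivity) hyq)
  · have hx' := rpow_le_two_rpow_abs_mul_rpow (by linarith) hxc (by linarith) p
    calc x ^ p * y ^ q ≤ 2 ^ |p| * c ^ p * y ^ q := mul_le_mul_of_nonneg_right hx' hyq
      _ ≤ _ := le_add_of_nonneg_left (mul_nonneg (by positivity) hxp)

lemma div_rpow_mul_rpow_le {r t α a : ℝ} (hr : 0 < r) (hrt : r ≤ t) (ht : t ≤ 1) :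
    (r / t) ^ α * t ^ a ≤ r ^ min α a := by
  have ht0 : 0 < t := hr.trans_le hrt
  rcases le_total α a with h | h
  · calc (r / t) ^ α * t ^ a = r ^ α * t ^ (a - α) := by
          rw [div_rpow hr.le ht0.le, rpow_sub ht0]; field_simp
      _ ≤ r ^ α := mul_le_of_le_one_right (by positivity) (rpow_le_one ht0.le ht (by linarith))
      _ = r ^ min α a := by rw [min_eq_left h]
  · calc (r / t) ^ α * t ^ a ≤ (r / t) ^ a * t ^ a := by
          gcongr ?_ * _
          exact rpow_le_rpow_of_exponent_ge (by positivity) (div_le_one_of_le₀ hrt ht0.le) h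
      _ = r ^ min α a := by rw [min_eq_right h, ← mul_rpow (by positivity) ht0.le,
          div_mul_cancel₀ _ ht0.ne']

lemma integrableOn_Ioc_one_sub_rpow {s b : ℝ} (hs : s ≤ 1) (hb : 0 < b) :
    IntegrableOn (fun t : ℝ => (1 - t) ^ (b - 1)) (Ioc s 1) := by
  have h := (intervalIntegral.intervalIntegrable_rpow' (a := 0) (b := 1 - s)
    (r := b - 1) (by linarith)).comp_sub_left 1
  rw [sub_zero, sub_sub_cancel] at h
  exact (intervalIntegrable_iff_integrableOn_Ioc_of_le hs).1 h.symm

lemma integral_Ioc_one_sub_rpow {s b : ℝ} (hs : s ≤ 1) (hb : 0 < b) :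
    ∫ t in Ioc s 1, (1 - t) ^ (b - 1) = (1 - s) ^ b / b := by
  rw [← intervalIntegral.integral_of_le hs,
    intervalIntegral.integral_comp_sub_left (fun x : ℝ => x ^ (b - 1)) 1, sub_self,
    integral_rpow (Or.inl (by linarith)), sub_add_cancel, zero_rpow hb.ne', sub_zero]

lemma integrableOn_Ioc_one_sub_rpow_div_of_nonneg {s b : ℝ} (hs : 0 < s) (hb : 0 ≤ b) :
    IntegrableOn (fun t : ℝ => (1 - t) ^ b / t) (Ioc s 1) :=
  (((continuousOn_const.sub continuousOn_id).rpow_const fun _ _ => Or.inr hb).div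
    continuousOn_id fun _ ht => (hs.trans_le ht.1).ne').integrableOn_Icc.mono_set
    Ioc_subset_Icc_self

lemma one_sub_rpow_div_eq {t b : ℝ} (ht : 0 < t) (ht1 : t ≤ 1) (hb : b ≠ 0) :
    (1 - t) ^ (b - 1) / t = (1 - t) ^ (b - 1) + (1 - t) ^ b / t := by
  rw [← sub_add_cancel b 1, rpow_add_one' (by linarith) (by simpa using hb), sub_add_cancel]
  field_simp
  ring

lemma integrableOn_Ioc_one_sub_rpow_div {s b : ℝ} (hs : 0 < s) (hs1 : s ≤ 1) (hb : 0 < b) :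
    IntegrableOn (fun t : ℝ => (1 - t) ^ (b - 1) / t) (Ioc s 1) :=
  ((integrableOn_Ioc_one_sub_rpow hs1 hb).add
    (integrableOn_Ioc_one_sub_rpow_div_of_nonneg hs hb.le)).congr_fun
    (fun _ ht => (one_sub_rpow_div_eq (hs.trans ht.1) ht.2 hb.ne').symm) measurableSet_Ioc

/-- Splitting `1 / t = 1 + (1 - t) / t` separates the singularity at `1` from the logarithmic
one at `0`. -/
lemma integral_Ioc_one_sub_rpow_div_le {s b : ℝ} (hs : 0 < s) (hs1 : s ≤ 1) (hb : 0 < b) :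
    ∫ t in Ioc s 1, (1 - t) ^ (b - 1) / t ≤ max b⁻¹ 1 * ((1 - s) ^ b * log (exp 1 / s)) := by
  have hinv : IntegrableOn (fun t : ℝ => 1 / t) (Ioc s 1) := by
    simpa using integrableOn_Ioc_one_sub_rpow_div_of_nonneg hs le_rfl
  have hsplit : ∫ t in Ioc s 1, (1 - t) ^ (b - 1) / t
      = (1 - s) ^ b / b + ∫ t in Ioc s 1, (1 - t) ^ b / t := by
    rw [setIntegral_congr_fun measurableSet_Ioc
      fun t ht => one_sub_rpow_div_eq (hs.trans ht.1) ht.2 hb.ne',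
      integral_add (integrableOn_Ioc_one_sub_rpow hs1 hb)
        (integrableOn_Ioc_one_sub_rpow_div_of_nonneg hs hb.le),
      integral_Ioc_one_sub_rpow hs1 hb]
  have htail : ∫ t in Ioc s 1, (1 - t) ^ b / t ≤ (1 - s) ^ b * -log s := by
    calc ∫ t in Ioc s 1, (1 - t) ^ b / t ≤ ∫ t in Ioc s 1, (1 - s) ^ b * (1 / t) := by
          refine setIntegral_mono_on (integrableOn_Ioc_one_sub_rpow_div_of_nonneg hs hb.le)
            (hinv.const_mul _) measurableSet_Ioc fun t ht => ?_
          have ht0 : 0 < t := hs.trans ht.1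
          rw [mul_one_div]
          gcongr
          · linarith [ht.2]
          · linarith [ht.1]
      _ = (1 - s) ^ b * -log s := by
          rw [integral_const_mul, ← intervalIntegral.integral_of_le hs1,
            integral_one_div_of_pos hs one_pos, one_div, log_inv]
  have hM : b⁻¹ ≤ max b⁻¹ 1 := le_max_left _ _
  have hM1 : 1 ≤ max b⁻¹ 1 := le_max_right _ _
  have hlog : 0 ≤ -log s := neg_nonneg.2 (log_nonpos hs.le hs1)
  have hpow : 0 ≤ (1 - s) ^ b := rpow_nonneg (by linarith) b
  rw [hsplit, log_exp_one_div hs, div_eq_mul_inv]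
  nlinarith [mul_le_mul_of_nonneg_left hM hpow,
    mul_le_mul_of_nonneg_left hM1 (mul_nonneg hpow hlog)]

section Inversion

variable {r : ℝ}

lemma image_const_div_Ioo (hr : 0 < r) : (fun t => r / t) '' Ioo r 1 = Ioo r 1 := by
  ext x
  constructor
  · rintro ⟨t, ⟨hrt, ht1⟩, rfl⟩
    have ht0 : 0 < t := hr.trans hrt
    exact ⟨(lt_div_iff₀ ht0).2 (by nlinarith), (div_lt_one ht0).2 hrt⟩
  · rintro ⟨hrx, hx1⟩
    have hx0 : 0 < x := hr.trans hrx
    exact ⟨r / x, ⟨(lt_div_iff₀ hx0).2 (by nlinarith), (div_lt_one hx0).2 hrx⟩,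
      div_div_cancel₀ hr.ne'⟩

lemma hasDerivWithinAt_const_div (hr : 0 < r) {t : ℝ} (ht : t ∈ Ioo r 1) :
    HasDerivWithinAt (fun t => r / t) (-r / t ^ 2) (Ioo r 1) t := by
  have h := (hasDerivAt_const t r).fun_div (hasDerivAt_id t) (hr.trans ht.1).ne'
  simpa using h.hasDerivWithinAt

lemma injOn_const_div (hr : 0 < r) : InjOn (fun t => r / t) (Ioo r 1) := fun x hx y hy h => by
  simpa [(hr.trans hx.1).ne', (hr.trans hy.1).ne', hr.ne'] using (div_eq_div_iff_comm ..).1 h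

lemma abs_neg_div_sq_mul_div_div {g : ℝ → ℝ} (hr : 0 < r) {t : ℝ} (ht : 0 < t) :
    |-r / t ^ 2| • (g (r / (r / t)) / (r / t)) = g t / t := by
  rw [smul_eq_mul, abs_div, abs_neg, abs_of_pos hr, abs_of_pos (by positivity),
    div_div_cancel₀ hr.ne']
  field_simp

lemma integrableOn_Ioc_comp_const_div_iff (hr : 0 < r) (g : ℝ → ℝ) :
    IntegrableOn (fun t => g (r / t) / t) (Ioc r 1) ↔
      IntegrableOn (fun t => g t / t) (Ioc r 1) := by
  rw [integrableOn_Ioc_iff_integrableOn_Ioo' (by simp),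
    integrableOn_Ioc_iff_integrableOn_Ioo' (by simp),
    ← image_const_div_Ioo hr, integrableOn_image_iff_integrableOn_abs_deriv_smul measurableSet_Ioo
      (fun t ht => hasDerivWithinAt_const_div hr ht) (injOn_const_div hr), image_const_div_Ioo hr]
  exact integrableOn_congr_fun (fun t ht => abs_neg_div_sq_mul_div_div hr (hr.trans ht.1))
    measurableSet_Ioo

lemma integral_Ioc_comp_const_div (hr : 0 < r) (g : ℝ → ℝ) :
    ∫ t in Ioc r 1, g (r / t) / t = ∫ t in Ioc r 1, g t / t := by
  rw [integral_Ioc_eq_integral_Ioo, integral_Ioc_eq_integral_Ioo, ← image_const_div_Ioo hr,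
    integral_image_eq_integral_abs_deriv_smul measurableSet_Ioo
      (fun t ht => hasDerivWithinAt_const_div hr ht) (injOn_const_div hr), image_const_div_Ioo hr]
  exact setIntegral_congr_fun measurableSet_Ioo fun t ht =>
    abs_neg_div_sq_mul_div_div hr (hr.trans ht.1)

end Inversion

section Kernel

variable {r β b : ℝ}

lemma one_sub_rpow_mul_one_sub_rpow_div_le (hr : 0 < r) (hr1 : r < 1) {t : ℝ}
    (ht : t ∈ Ioc r 1) :
    (1 - r / t) ^ (β - 1) * (1 - t) ^ (b - 1) / t ≤
      2 ^ |b - 1| * (1 - r) ^ (b - 1) * ((1 - r / t) ^ (β - 1) / t) +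
        2 ^ |β - 1| * (1 - r) ^ (β - 1) * ((1 - t) ^ (b - 1) / t) := by
  obtain ⟨hrt, ht1⟩ := ht
  have ht0 : 0 < t := hr.trans hrt
  have hrt1 : r / t < 1 := (div_lt_one ht0).2 hrt
  have hsum : 1 - r ≤ (1 - r / t) + (1 - t) := by
    have : (1 - r / t) * (1 - t) = (1 - r / t) + (1 - t) - (1 - r) := by field_simp; ring
    nlinarith [mul_nonneg (sub_nonneg.2 hrt1.le) (sub_nonneg.2 ht1)]
  have hrt' : r ≤ r / t := (le_div_iff₀ ht0).2 (by nlinarith)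
  calc (1 - r / t) ^ (β - 1) * (1 - t) ^ (b - 1) / t
      ≤ (2 ^ |b - 1| * (1 - r) ^ (b - 1) * (1 - r / t) ^ (β - 1) +
          2 ^ |β - 1| * (1 - r) ^ (β - 1) * (1 - t) ^ (b - 1)) / t := by
        gcongr
        exact rpow_mul_rpow_le_add (sub_nonneg.2 hrt1.le) (sub_nonneg.2 ht1) (sub_pos.2 hr1)
          (by linarith) (by linarith) hsum (β - 1) (b - 1)
    _ = _ := by ring

lemma integrableOn_Ioc_one_sub_const_div_rpow_div (hr : 0 < r) (hr1 : r ≤ 1) (hβ : 0 < β) :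
    IntegrableOn (fun t => (1 - r / t) ^ (β - 1) / t) (Ioc r 1) :=
  (integrableOn_Ioc_comp_const_div_iff hr fun u => (1 - u) ^ (β - 1)).2
    (integrableOn_Ioc_one_sub_rpow_div hr hr1 hβ)

lemma integrableOn_mellinConv_one_sub_rpow (hr : 0 < r) (hr1 : r < 1) (hβ : 0 < β)
    (hb : 0 < b) :
    IntegrableOn (fun t => (1 - r / t) ^ (β - 1) * (1 - t) ^ (b - 1) / t) (Ioc r 1) := by
  refine Integrable.mono'
    (((integrableOn_Ioc_one_sub_const_div_rpow_div hr hr1.le hβ).const_mul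
      (2 ^ |b - 1| * (1 - r) ^ (b - 1))).add
      ((integrableOn_Ioc_one_sub_rpow_div hr hr1.le hb).const_mul
        (2 ^ |β - 1| * (1 - r) ^ (β - 1))))
    (Measurable.aestronglyMeasurable (by fun_prop))
    ((ae_restrict_iff' measurableSet_Ioc).2 (.of_forall fun t ht => ?_))
  have ht0 : 0 < t := hr.trans ht.1
  rw [Real.norm_of_nonneg (div_nonneg (mul_nonneg (rpow_nonneg (sub_nonneg.2
    ((div_le_one ht0).2 ht.1.le)) _) (rpow_nonneg (sub_nonneg.2 ht.2) _)) ht0.le)]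
  exact one_sub_rpow_mul_one_sub_rpow_div_le hr hr1 ht

lemma mellinConv_one_sub_rpow_le (hβ : 0 < β) (hb : 0 < b) :
    ∃ K, ∀ r ∈ Ioo (0 : ℝ) 1,
      mellinConv (fun x => (1 - x) ^ (β - 1)) (fun x => (1 - x) ^ (b - 1)) r ≤
        K * (1 - r) ^ (β + b - 1) * log (exp 1 / r) := by
  refine ⟨2 ^ |b - 1| * max β⁻¹ 1 + 2 ^ |β - 1| * max b⁻¹ 1, fun r ⟨hr, hr1⟩ => ?_⟩
  have h1r : 0 < 1 - r := sub_pos.2 hr1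
  have hβ' := integrableOn_Ioc_one_sub_const_div_rpow_div hr hr1.le hβ
  have hb' := integrableOn_Ioc_one_sub_rpow_div hr hr1.le hb
  calc mellinConv (fun x => (1 - x) ^ (β - 1)) (fun x => (1 - x) ^ (b - 1)) r
      ≤ ∫ t in Ioc r 1, (2 ^ |b - 1| * (1 - r) ^ (b - 1) * ((1 - r / t) ^ (β - 1) / t) +
          2 ^ |β - 1| * (1 - r) ^ (β - 1) * ((1 - t) ^ (b - 1) / t)) :=
        setIntegral_mono_on (integrableOn_mellinConv_one_sub_rpow hr hr1 hβ hb)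
          ((hβ'.const_mul _).add (hb'.const_mul _)) measurableSet_Ioc
          fun t ht => one_sub_rpow_mul_one_sub_rpow_div_le hr hr1 ht
    _ = 2 ^ |b - 1| * (1 - r) ^ (b - 1) * (∫ t in Ioc r 1, (1 - t) ^ (β - 1) / t) +
          2 ^ |β - 1| * (1 - r) ^ (β - 1) * ∫ t in Ioc r 1, (1 - t) ^ (b - 1) / t := by
        rw [integral_add (hβ'.const_mul _) (hb'.const_mul _), integral_const_mul,
          integral_const_mul, integral_Ioc_comp_const_div hr fun u => (1 - u) ^ (β - 1)]
    _ ≤ 2 ^ |b - 1| * (1 - r) ^ (b - 1) * (max β⁻¹ 1 * ((1 - r) ^ β * log (exp 1 / r))) +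
          2 ^ |β - 1| * (1 - r) ^ (β - 1) * (max b⁻¹ 1 * ((1 - r) ^ b * log (exp 1 / r))) := by
        gcongr
        · exact integral_Ioc_one_sub_rpow_div_le hr hr1.le hβ
        · exact integral_Ioc_one_sub_rpow_div_le hr hr1.le hb
    _ = (2 ^ |b - 1| * max β⁻¹ 1 + 2 ^ |β - 1| * max b⁻¹ 1) * (1 - r) ^ (β + b - 1) *
          log (exp 1 / r) := by
        have e₁ : (1 - r) ^ (b - 1) * (1 - r) ^ β = (1 - r) ^ (β + b - 1) := by
          rw [← rpow_add h1r]; ring_nf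
        have e₂ : (1 - r) ^ (β - 1) * (1 - r) ^ b = (1 - r) ^ (β + b - 1) := by
          rw [← rpow_add h1r]; ring_nf
        linear_combination (2 ^ |b - 1| * max β⁻¹ 1 * log (exp 1 / r)) * e₁ +
          (2 ^ |β - 1| * max b⁻¹ 1 * log (exp 1 / r)) * e₂

end Kernel

def IsMellinType (h : ℝ → ℝ) (α β : ℝ) (n : ℕ) : Prop :=
  ∃ C, ∀ r ∈ Ioo (0 : ℝ) 1, |h r| ≤ C * r ^ α * (1 - r) ^ (β - 1) * log (exp 1 / r) ^ n

lemma isMellinType_rpow_mul_one_sub_rpow (a b : ℝ) :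
    IsMellinType (fun r => r ^ a * (1 - r) ^ (b - 1)) a b 0 :=
  ⟨1, fun r hr => by
    rw [pow_zero, mul_one, one_mul, abs_of_nonneg
      (mul_nonneg (rpow_nonneg hr.1.le _) (rpow_nonneg (sub_nonneg.2 hr.2.le) _))]⟩

namespace IsMellinType

variable {g : ℝ → ℝ} {α β : ℝ} {n : ℕ}

lemma exists_nonneg (hg : IsMellinType g α β n) :
    ∃ C, 0 ≤ C ∧ ∀ r ∈ Ioo (0 : ℝ) 1,
      |g r| ≤ C * r ^ α * (1 - r) ^ (β - 1) * log (exp 1 / r) ^ n := by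
  obtain ⟨C, hC⟩ := hg
  refine ⟨max C 0, le_max_right _ _, fun r hr => (hC r hr).trans ?_⟩
  have hL : 0 ≤ log (exp 1 / r) := zero_le_one.trans (one_le_log_exp_one_div hr.1 hr.2.le)
  gcongr
  · exact rpow_nonneg (sub_nonneg.2 hr.2.le) _
  · exact rpow_nonneg hr.1.le _
  · exact le_max_left _ _

lemma abs_comp_div_mul_div_le {C a b : ℝ} (hC : 0 ≤ C)
    (hg : ∀ x ∈ Ioo (0 : ℝ) 1,
      |g x| ≤ C * x ^ α * (1 - x) ^ (β - 1) * log (exp 1 / x) ^ n)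
    {r t : ℝ} (hr : 0 < r) (ht : t ∈ Ioc r 1) :
    |g (r / t) * (t ^ a * (1 - t) ^ (b - 1)) / t| ≤
      C * r ^ min α a * log (exp 1 / r) ^ n *
        ((1 - r / t) ^ (β - 1) * (1 - t) ^ (b - 1) / t) := by
  obtain ⟨hrt, ht1⟩ := ht
  have ht0 : 0 < t := hr.trans hrt
  have hrt' : r ≤ r / t := (le_div_iff₀ ht0).2 (by nlinarith)
  have hx : r / t ∈ Ioo (0 : ℝ) 1 := ⟨div_pos hr ht0, (div_lt_one ht0).2 hrt⟩
  have hf : 0 ≤ t ^ a * (1 - t) ^ (b - 1) :=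
    mul_nonneg (rpow_nonneg ht0.le _) (rpow_nonneg (sub_nonneg.2 ht1) _)
  calc |g (r / t) * (t ^ a * (1 - t) ^ (b - 1)) / t|
      = |g (r / t)| * (t ^ a * (1 - t) ^ (b - 1)) / t := by
        rw [abs_div, abs_mul, abs_of_nonneg hf, abs_of_pos ht0]
    _ ≤ C * (r / t) ^ α * (1 - r / t) ^ (β - 1) * log (exp 1 / (r / t)) ^ n *
          (t ^ a * (1 - t) ^ (b - 1)) / t := by
        gcongr
        exact hg _ hx
    _ = C * ((r / t) ^ α * t ^ a) * log (exp 1 / (r / t)) ^ n *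
          ((1 - r / t) ^ (β - 1) * (1 - t) ^ (b - 1) / t) := by ring
    _ ≤ C * r ^ min α a * log (exp 1 / r) ^ n *
          ((1 - r / t) ^ (β - 1) * (1 - t) ^ (b - 1) / t) := by
        have h1x : 0 ≤ 1 - r / t := sub_nonneg.2 hx.2.le
        have hL : 0 ≤ log (exp 1 / (r / t)) :=
          zero_le_one.trans (one_le_log_exp_one_div hx.1 hx.2.le)
        gcongr
        exact div_rpow_mul_rpow_le hr hrt.le ht1

theorem mellinConv_rpow_mul_one_sub_rpow (hg : IsMellinType g α β n) {a b : ℝ} (hβ : 0 < β)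
    (hb : 0 < b) :
    IsMellinType (mellinConv g fun t => t ^ a * (1 - t) ^ (b - 1)) (min α a) (β + b)
      (n + 1) := by
  obtain ⟨C, hC, hgC⟩ := hg.exists_nonneg
  obtain ⟨K, hK⟩ := mellinConv_one_sub_rpow_le hβ hb
  refine ⟨C * K, fun r hr => ?_⟩
  have hA : 0 ≤ C * r ^ min α a * log (exp 1 / r) ^ n :=
    mul_nonneg (mul_nonneg hC (rpow_nonneg hr.1.le _))
      (pow_nonneg (zero_le_one.trans (one_le_log_exp_one_div hr.1 hr.2.le)) n)
  calc |mellinConv g (fun t => t ^ a * (1 - t) ^ (b - 1)) r|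
      = ‖∫ t in Ioc r 1, g (r / t) * (t ^ a * (1 - t) ^ (b - 1)) / t‖ := rfl
    _ ≤ ∫ t in Ioc r 1, C * r ^ min α a * log (exp 1 / r) ^ n *
          ((1 - r / t) ^ (β - 1) * (1 - t) ^ (b - 1) / t) :=
        norm_integral_le_of_norm_le
          ((integrableOn_mellinConv_one_sub_rpow hr.1 hr.2 hβ hb).const_mul _)
          (ae_restrict_of_forall_mem measurableSet_Ioc fun t ht =>
            abs_comp_div_mul_div_le hC hgC hr.1 ht)
    _ = C * r ^ min α a * log (exp 1 / r) ^ n *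
          mellinConv (fun x => (1 - x) ^ (β - 1)) (fun x => (1 - x) ^ (b - 1)) r :=
        integral_const_mul _ _
    _ ≤ C * r ^ min α a * log (exp 1 / r) ^ n * (K * (1 - r) ^ (β + b - 1) * log (exp 1 / r)) :=
        mul_le_mul_of_nonneg_left (hK r hr) hA
    _ = C * K * r ^ min α a * (1 - r) ^ (β + b - 1) * log (exp 1 / r) ^ (n + 1) := by ring

end IsMellinType

/-- Lemma A: the `(n+1)`-fold Mellin convolution of the functions
`f i r = r^(a i) (1-r)^(b i - 1)` is bounded by
`C r^α (1-r)^(β-1) (ln(e/r))^n` where `α = min a i`, `β = ∑ b i`. -/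
theorem iterConv_type (n : ℕ) (a b : ℕ → ℝ)
    (hb : ∀ i ≤ n, 0 < b i) :
    ∃ C : ℝ, ∀ r ∈ Set.Ioo (0:ℝ) 1,
      |iterConv (fun i r => r ^ a i * (1 - r) ^ (b i - 1)) n r| ≤
        C * r ^ ((Finset.range (n + 1)).inf' (by simp) a) *
          (1 - r) ^ ((∑ i ∈ Finset.range (n + 1), b i) - 1) *
          Real.log (Real.exp 1 / r) ^ n := by
  show IsMellinType (iterConv _ n) _ _ n
  induction n with
  | zero => simpa [iterConv] using isMellinType_rpow_mul_one_sub_rpow (a 0) (b 0)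
  | succ n ih =>
    have hβ : 0 < ∑ i ∈ Finset.range (n + 1), b i :=
      Finset.sum_pos (fun i hi => hb i (by grind)) Finset.nonempty_range_add_one
    have h := (ih fun i hi => hb i (by omega)).mellinConv_rpow_mul_one_sub_rpow
      (a := a (n + 1)) hβ (hb (n + 1) le_rfl)
    convert h using 2
    · rfl
    · simp [Finset.range_add_one, min_comm]
    · exact Finset.sum_range_succ b (n + 1)
end

section
/- Let φ ∈ L¹([0,1], r dr) and suppose there exist natural numbers n₀ and p ≥ 1 such that the Mellin transform M(φ)(pk + n₀) = 0 for all k ∈ ℕ (with pk + n₀ ≥ 2). Then M(φ)(z) = 0 for all z with Re z > 2, and consequently φ = 0 almost everywhere. -/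
open MeasureTheory Set

/-- The Mellin transform of a function on `[0,1]`: `M(φ)(z) = ∫_0^1 φ(r) r^(z-1) dr`. -/
noncomputable def mellin01 (φ : ℝ → ℂ) (z : ℂ) : ℂ :=
  ∫ r in Set.Ioo (0:ℝ) 1, φ r * (r : ℂ) ^ (z - 1)

/-!
With `m = 2p + n₀ - 1`, the function `ψ(r) = φ(r) r^m` is integrable on `(0, 1)` and its moments
`∫ ψ(r) r^(pj) dr = M(φ)(p(j + 2) + n₀)` all vanish. Since `r ↦ r^p` is injective on `[0, 1]`,
Stone–Weierstrass makes polynomials in `r^p` dense in `C([0, 1], ℝ)`, and integration against an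
`L¹` function is a continuous functional there; so `ψ` integrates to zero against every continuous
function, hence `ψ = 0`, and so `φ = 0`, almost everywhere. Then `M(φ)` vanishes identically.
-/

lemma ContinuousMap.dense_span_range_pow {X : Type*} [TopologicalSpace X] [CompactSpace X]
    {g : C(X, ℝ)} (hg : Function.Injective g) :
    Dense (Submodule.span ℝ (range (g ^ ·)) : Set C(X, ℝ)) := by
  have hsep : (Algebra.adjoin ℝ {g}).SeparatesPoints := fun x y hxy =>
    ⟨g, ⟨g, Algebra.subset_adjoin rfl, rfl⟩, hg.ne hxy⟩
  rw [← Submonoid.coe_powers, Submonoid.powers_eq_closure, ← Algebra.adjoin_eq_span,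
    Subalgebra.coe_toSubmodule, dense_iff_closure_eq, ← Subalgebra.topologicalClosure_coe,
    ContinuousMap.subalgebra_topologicalClosure_eq_top_of_separatesPoints _ hsep,
    Algebra.coe_top]

section IntegralAgainst

variable {F : Type*} [NormedAddCommGroup F] [NormedSpace ℝ F]
  {a b : ℝ} (hab : a ≤ b) {μ : Measure ℝ} {h : ℝ → F}

lemma MeasureTheory.Integrable.IccExtend_smul (hh : Integrable h μ) (f : C(Icc a b, ℝ)) :
    Integrable (fun r => IccExtend hab f r • h r) μ :=
  hh.bdd_smul ‖f‖ (ContinuousMap.IccExtend hab f).continuous.aestronglyMeasurable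
    (ae_of_all _ fun _ => f.norm_coe_le_norm _)

noncomputable def integralSMulCLM (hh : Integrable h μ) : C(Icc a b, ℝ) →L[ℝ] F :=
  LinearMap.mkContinuous
    { toFun := fun f => ∫ r, IccExtend hab f r • h r ∂μ
      map_add' := fun f g => by
        simp only [ContinuousMap.coe_add, IccExtend_apply, Pi.add_apply, add_smul]
        exact integral_add (hh.IccExtend_smul hab f) (hh.IccExtend_smul hab g)
      map_smul' := fun c f => by
        simp only [ContinuousMap.coe_smul, IccExtend_apply, Pi.smul_apply, smul_eq_mul,
          mul_smul, RingHom.id_apply]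
        exact integral_smul c _ }
    (∫ r, ‖h r‖ ∂μ) fun f => by
      calc ‖∫ r, IccExtend hab f r • h r ∂μ‖ ≤ ∫ r, ‖f‖ * ‖h r‖ ∂μ := by
            refine norm_integral_le_of_norm_le (hh.norm.const_mul _) (ae_of_all _ fun r => ?_)
            rw [norm_smul]
            gcongr
            exact f.norm_coe_le_norm _
        _ = (∫ r, ‖h r‖ ∂μ) * ‖f‖ := by rw [integral_const_mul, mul_comm]

variable [CompleteSpace F]

lemma ae_eq_zero_of_forall_integral_IccExtend_smul_eq_zero (hh : Integrable h μ)
    (hμ : ∀ᵐ r ∂μ, r ∈ Icc a b)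
    (h0 : ∀ f : C(Icc a b, ℝ), ∫ r, IccExtend hab f r • h r ∂μ = 0) :
    ∀ᵐ r ∂μ, h r = 0 := by
  refine ae_eq_zero_of_integral_contDiff_smul_eq_zero hh.locallyIntegrable fun g hg _ => ?_
  rw [← h0 ((ContinuousMap.mk g hg.continuous).restrict (Icc a b))]
  refine integral_congr_ae ?_
  filter_upwards [hμ] with r hr
  simp [IccExtend_of_mem hab _ hr]

lemma ae_eq_zero_of_integral_IccExtend_smul_eq_zero_of_dense (hh : Integrable h μ)
    (hμ : ∀ᵐ r ∂μ, r ∈ Icc a b) {S : Set C(Icc a b, ℝ)}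
    (hS : Dense (Submodule.span ℝ S : Set C(Icc a b, ℝ)))
    (h0 : ∀ f ∈ S, ∫ r, IccExtend hab f r • h r ∂μ = 0) :
    ∀ᵐ r ∂μ, h r = 0 := by
  refine ae_eq_zero_of_forall_integral_IccExtend_smul_eq_zero hab hh hμ fun f => ?_
  set L := integralSMulCLM hab hh
  have hker : Submodule.span ℝ S ≤ L.ker := Submodule.span_le.2 fun f hf => h0 f hf
  exact L.isClosed_ker.closure_subset_iff.2 hker (hS f)

lemma ae_eq_zero_of_integral_pow_smul_eq_zero (ha : 0 ≤ a) (hab : a ≤ b) {p : ℕ} (hp : p ≠ 0)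
    (hh : Integrable h μ) (hμ : ∀ᵐ r ∂μ, r ∈ Icc a b)
    (hmoments : ∀ j : ℕ, ∫ r, (r ^ (p * j)) • h r ∂μ = 0) :
    ∀ᵐ r ∂μ, h r = 0 := by
  set g : C(Icc a b, ℝ) := ⟨fun x => (x : ℝ) ^ p, by fun_prop⟩
  have hg : Function.Injective g := fun x y hxy =>
    Subtype.ext ((pow_left_strictMonoOn₀ hp).injOn (ha.trans x.2.1) (ha.trans y.2.1) hxy)
  refine ae_eq_zero_of_integral_IccExtend_smul_eq_zero_of_dense hab hh hμ
    (ContinuousMap.dense_span_range_pow hg) ?_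
  rintro _ ⟨j, rfl⟩
  rw [← hmoments j]
  refine integral_congr_ae ?_
  filter_upwards [hμ] with r hr
  simp [IccExtend_of_mem hab _ hr, g, pow_mul]

end IntegralAgainst

lemma integrableOn_Ioo_mul_pow {g : ℝ → ℂ} (hg : IntegrableOn g (Ioo 0 1)) (n : ℕ) :
    IntegrableOn (fun r => g r * (r : ℂ) ^ n) (Ioo 0 1) := by
  refine hg.mul_bdd (c := 1) (by fun_prop) ?_
  filter_upwards [ae_restrict_mem measurableSet_Ioo] with r hr
  simpa [abs_of_pos hr.1] using pow_le_one₀ hr.1.le hr.2.le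

lemma mellin01_natCast_add_one (φ : ℝ → ℂ) (n : ℕ) :
    mellin01 φ (n + 1) = ∫ r in Ioo 0 1, φ r * (r : ℂ) ^ n := by
  simp only [mellin01, add_sub_cancel_right, Complex.cpow_natCast]

/-- If `φ ∈ L¹([0,1], r dr)` and its Mellin transform vanishes on an arithmetic
progression `p k + n₀`, then the Mellin transform vanishes identically on
`{Re z > 2}` and `φ = 0` almost everywhere. -/
theorem mellin01_eq_zero_of_arith_prog (φ : ℝ → ℂ) (n₀ p : ℕ) (hp : 1 ≤ p)
    (hφ : IntegrableOn (fun r => φ r * (r : ℂ)) (Set.Ioc 0 1))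
    (hvanish : ∀ k : ℕ, 2 ≤ p * k + n₀ → mellin01 φ (p * k + n₀) = 0) :
    (∀ z : ℂ, 2 < z.re → mellin01 φ z = 0) ∧
      (∀ᵐ r : ℝ, r ∈ Set.Ioc (0:ℝ) 1 → φ r = 0) := by
  set m := 2 * p + n₀ - 1
  have hψ : IntegrableOn (fun r => φ r * (r : ℂ) ^ m) (Ioo 0 1) := by
    have := integrableOn_Ioo_mul_pow (hφ.mono_set Ioo_subset_Ioc_self) (m - 1)
    simpa only [mul_assoc, ← pow_succ', Nat.sub_add_cancel (show 1 ≤ m by omega)] using this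
  have hmoments : ∀ j : ℕ, ∫ r in Ioo 0 1, (r ^ (p * j)) • (φ r * (r : ℂ) ^ m) = 0 := by
    intro j
    have hk : p * (j + 2) + n₀ = m + p * j + 1 := by rw [Nat.mul_add]; omega
    rw [← hvanish (j + 2) (by nlinarith), ← Nat.cast_mul, ← Nat.cast_add, hk, Nat.cast_succ,
      mellin01_natCast_add_one]
    refine integral_congr_ae (ae_of_all _ fun r => ?_)
    simp only [Complex.real_smul, pow_add]
    push_cast
    ring
  have hφ0 : ∀ᵐ r ∂volume.restrict (Ioo 0 1), φ r = 0 := by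
    filter_upwards [ae_eq_zero_of_integral_pow_smul_eq_zero le_rfl zero_le_one (by omega) hψ
      ((ae_restrict_mem measurableSet_Ioo).mono fun _ hr => Ioo_subset_Icc_self hr) hmoments,
      ae_restrict_mem measurableSet_Ioo] with r hψr hr
    exact (mul_eq_zero.1 hψr).resolve_right (pow_ne_zero _ (by exact_mod_cast hr.1.ne'))
  refine ⟨fun z _ => integral_eq_zero_of_ae ?_, ?_⟩
  · filter_upwards [hφ0] with r hr
    simp [hr]
  · rwa [Measure.restrict_congr_set Ioo_ae_eq_Ioc, ae_restrict_iff' measurableSet_Ioc] at hφ0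
end

section
/- Suppose f is a bounded analytic function on the right half-plane {z : Re z > 0} which vanishes at pairwise distinct points z₁, z₂, … satisfying inf_n |z_n| > 0 and Σ_{n≥1} Re(1/z_n) = ∞. Then f vanishes identically on {z : Re z > 0}. -/
/-!
Dividing `f` by the Blaschke factor `(z - a) / (z + conj a)` of a zero `a` does not increase its
sup-norm on the half-plane: this is the Schwarz lemma transported to the half-plane by the Cayley
transform. Dividing successively by the factors of `z 0, …, z (n - 1)` gives
`|f w| ≤ M ∏ |w - z k| / |w + conj (z k)|`, and since
`|w - a|² = |w + conj a|² - 4 Re w Re a`, each factor is at most `exp (-t k)` with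
`t k = 2 Re w Re (z k) / |w + conj (z k)|²`. When `|z k| ≥ δ`, `t k` is at least a fixed multiple
of `Re (1 / z k)`, so `∑ t k = ∞` and `f w = 0`.
-/

open Complex ComplexConjugate Filter Metric Set Topology

section BlaschkeFactor

variable {w a : ℂ}

theorem norm_add_conj_sq_sub_norm_sub_sq (w a : ℂ) :
    ‖w + conj a‖ ^ 2 - ‖w - a‖ ^ 2 = 4 * w.re * a.re := by
  simp only [Complex.sq_norm, normSq_apply, add_re, add_im, sub_re, sub_im, conj_re, conj_im]
  ring

theorem norm_add_conj_pos (hw : 0 < w.re) (ha : 0 < a.re) : 0 < ‖w + conj a‖ :=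
  norm_pos_iff.2 fun h => by
    have := congrArg re h
    simp only [add_re, conj_re, zero_re] at this
    linarith

theorem norm_sub_le_norm_add_conj_mul_exp (hw : 0 < w.re) (ha : 0 < a.re) :
    ‖w - a‖ ≤ ‖w + conj a‖ * Real.exp (-(2 * w.re * a.re / ‖w + conj a‖ ^ 2)) := by
  have hP := norm_add_conj_pos hw ha
  refine (pow_le_pow_iff_left₀ (norm_nonneg _) (by positivity) two_ne_zero).1 ?_
  have hexp : Real.exp (-(2 * w.re * a.re / ‖w + conj a‖ ^ 2)) ^ 2
      = Real.exp (-(4 * w.re * a.re / ‖w + conj a‖ ^ 2)) := by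
    rw [← Real.exp_nat_mul]; ring_nf
  calc ‖w - a‖ ^ 2 = ‖w + conj a‖ ^ 2 * (1 - 4 * w.re * a.re / ‖w + conj a‖ ^ 2) := by
        rw [mul_one_sub, mul_div_cancel₀ _ (by positivity)]
        linarith [norm_add_conj_sq_sub_norm_sub_sq w a]
    _ ≤ ‖w + conj a‖ ^ 2 * Real.exp (-(4 * w.re * a.re / ‖w + conj a‖ ^ 2)) := by
        gcongr
        linarith [Real.add_one_le_exp (-(4 * w.re * a.re / ‖w + conj a‖ ^ 2))]
    _ = _ := by rw [mul_pow, hexp]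

theorem mul_re_one_div_le_of_le_norm (hw : 0 < w.re) (ha : 0 < a.re) {δ : ℝ} (hδ : 0 < δ)
    (hδa : δ ≤ ‖a‖) :
    2 * w.re / (1 + ‖w‖ / δ) ^ 2 * (1 / a).re ≤ 2 * w.re * a.re / ‖w + conj a‖ ^ 2 := by
  have ha0 : 0 < ‖a‖ := hδ.trans_le hδa
  have hP : ‖w + conj a‖ ≤ (1 + ‖w‖ / δ) * ‖a‖ := calc
    ‖w + conj a‖ ≤ ‖w‖ + ‖a‖ := by simpa using norm_add_le w (conj a)
    _ ≤ ‖w‖ / δ * ‖a‖ + ‖a‖ := by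
        gcongr
        rw [div_mul_eq_mul_div, le_div_iff₀ hδ]
        exact mul_le_mul_of_nonneg_left hδa (norm_nonneg w)
    _ = (1 + ‖w‖ / δ) * ‖a‖ := by ring
  have := norm_add_conj_pos hw ha
  rw [one_div, inv_re, ← Complex.sq_norm]
  calc 2 * w.re / (1 + ‖w‖ / δ) ^ 2 * (a.re / ‖a‖ ^ 2)
      = 2 * w.re * a.re / ((1 + ‖w‖ / δ) * ‖a‖) ^ 2 := by field_simp
    _ ≤ 2 * w.re * a.re / ‖w + conj a‖ ^ 2 := by gcongr

end BlaschkeFactor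

theorem re_div_one_sub_pos {a ζ : ℂ} (ha : 0 < a.re) (hζ : ‖ζ‖ < 1) :
    0 < ((a + conj a * ζ) / (1 - ζ)).re := by
  have h1 : 1 - ζ ≠ 0 := fun h => by
    rw [sub_eq_zero] at h
    simp [← h] at hζ
  have hre : ((a + conj a * ζ) / (1 - ζ)).re = a.re * (1 - ‖ζ‖ ^ 2) / normSq (1 - ζ) := by
    rw [Complex.sq_norm, div_re]
    simp only [normSq_apply, add_re, add_im, mul_re, mul_im, conj_re, conj_im, sub_re, sub_im,
      one_re, one_im]
    field_simp
    ring
  rw [hre]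
  have : ‖ζ‖ ^ 2 < 1 := by nlinarith [norm_nonneg ζ]
  exact div_pos (mul_pos ha (by linarith)) (normSq_pos.2 h1)

theorem norm_mul_norm_add_conj_le_of_eq_zero {f : ℂ → ℂ} {M : ℝ} {a w : ℂ}
    (hf : DifferentiableOn ℂ f {z | 0 < z.re}) (hM : ∀ z, 0 < z.re → ‖f z‖ ≤ M)
    (ha : 0 < a.re) (hfa : f a = 0) (hw : 0 < w.re) :
    ‖f w‖ * ‖w + conj a‖ ≤ M * ‖w - a‖ := by
  -- `ψ` maps the unit disc onto the half-plane, `0` to `a`, and `(w - a) / (w + conj a)` to `w`;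
  -- the Schwarz lemma for `f ∘ ψ` is the claim.
  set ψ : ℂ → ℂ := fun ζ => (a + conj a * ζ) / (1 - ζ)
  have hψ : MapsTo ψ (ball 0 1) {z | 0 < z.re} := fun ζ hζ =>
    re_div_one_sub_pos ha (mem_ball_zero_iff.1 hζ)
  have hψd : DifferentiableOn ℂ ψ (ball 0 1) := by
    refine DifferentiableOn.div (by fun_prop) (by fun_prop) fun ζ hζ h => ?_
    rw [sub_eq_zero] at h
    simp [← h] at hζ
  have hP := norm_add_conj_pos hw ha
  have hP0 : w + conj a ≠ 0 := norm_pos_iff.1 hP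
  have haa : a + conj a ≠ 0 := by
    simpa using norm_pos_iff.1 (norm_add_conj_pos ha ha)
  set ζ := (w - a) / (w + conj a)
  have hζ : ζ ∈ ball 0 1 := by
    rw [mem_ball_zero_iff, norm_div, div_lt_one hP]
    refine lt_of_pow_lt_pow_left₀ 2 hP.le ?_
    nlinarith [norm_add_conj_sq_sub_norm_sub_sq w a, mul_pos hw ha]
  have hψζ : ψ ζ = w := by
    simp only [ψ, ζ]
    field_simp
    rw [show w + conj a - (w - a) = a + conj a by ring, div_eq_iff haa]
    ring
  have hschwarz := Complex.dist_le_div_mul_dist_of_mapsTo_ball (hf.comp hψd hψ)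
    (fun ξ hξ => by simpa [ψ, hfa] using hM _ (hψ hξ)) hζ
  simp only [Function.comp_apply, hψζ, ψ, mul_zero, add_zero, sub_zero, div_one, hfa,
    dist_zero_right] at hschwarz
  rwa [norm_div, mul_div_assoc', le_div_iff₀ hP] at hschwarz

/-- `f z * (z + conj a) / (z - a)`, with its removable singularity at a zero `a` of `f` filled in. -/
noncomputable def divBlaschke (f : ℂ → ℂ) (a : ℂ) (z : ℂ) : ℂ := dslope f a z * (z + conj a)

section divBlaschke

variable {f : ℂ → ℂ} {a : ℂ}

theorem divBlaschke_mul_sub (hfa : f a = 0) (z : ℂ) :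
    divBlaschke f a z * (z - a) = f z * (z + conj a) := by
  have := sub_smul_dslope f a z
  rw [smul_eq_mul, hfa, sub_zero] at this
  rw [divBlaschke, mul_right_comm, mul_comm _ (z - a), this]

theorem divBlaschke_eq_zero (hfa : f a = 0) {b : ℂ} (hfb : f b = 0) (hba : b ≠ a) :
    divBlaschke f a b = 0 := by
  simp [divBlaschke, dslope_of_ne _ hba, slope, hfa, hfb]

theorem DifferentiableOn.divBlaschke {s : Set ℂ} (hs : s ∈ 𝓝 a) (hf : DifferentiableOn ℂ f s) :
    DifferentiableOn ℂ (divBlaschke f a) s :=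
  ((differentiableOn_dslope hs).2 hf).mul (by fun_prop)

theorem norm_divBlaschke_le {M : ℝ} (hf : DifferentiableOn ℂ f {z | 0 < z.re})
    (hM : ∀ z, 0 < z.re → ‖f z‖ ≤ M) (ha : 0 < a.re) (hfa : f a = 0) {w : ℂ} (hw : 0 < w.re) :
    ‖divBlaschke f a w‖ ≤ M := by
  have hopen : IsOpen {z : ℂ | 0 < z.re} := isOpen_lt continuous_const continuous_re
  have hne : ∀ z, 0 < z.re → z ≠ a → ‖divBlaschke f a z‖ ≤ M := fun z hz hza => by
    have hza' : 0 < ‖z - a‖ := norm_pos_iff.2 (sub_ne_zero.2 hza)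
    rw [← mul_le_mul_iff_left₀ hza', ← norm_mul, divBlaschke_mul_sub hfa, norm_mul]
    exact norm_mul_norm_add_conj_le_of_eq_zero hf hM ha hfa hz
  rcases eq_or_ne w a with rfl | hwa
  · have hcont : ContinuousAt (divBlaschke f w) w :=
      ((hf.divBlaschke (hopen.mem_nhds hw)).continuousOn).continuousAt (hopen.mem_nhds hw)
    refine le_of_tendsto (hcont.norm.tendsto.mono_left (nhdsWithin_le_nhds (s := {w}ᶜ))) ?_
    filter_upwards [self_mem_nhdsWithin, mem_nhdsWithin_of_mem_nhds (hopen.mem_nhds hw)]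
      with z hzw hz using hne z hz hzw
  · exact hne w hw hwa

end divBlaschke

section BoundedHolomorphic

variable {f : ℂ → ℂ} {M : ℝ}

theorem norm_mul_prod_le_of_eq_zero (hf : DifferentiableOn ℂ f {z | 0 < z.re})
    (hM : ∀ z, 0 < z.re → ‖f z‖ ≤ M) {s : Finset ℂ} (hs : ∀ a ∈ s, 0 < a.re ∧ f a = 0)
    {w : ℂ} (hw : 0 < w.re) :
    ‖f w‖ * ∏ a ∈ s, ‖w + conj a‖ ≤ M * ∏ a ∈ s, ‖w - a‖ := by
  induction s using Finset.induction_on generalizing f with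
  | empty => simpa using hM w hw
  | insert a s has ih =>
    obtain ⟨ha, hfa⟩ := hs a (Finset.mem_insert_self a s)
    have hg := ih (f := divBlaschke f a)
      (hf.divBlaschke ((isOpen_lt continuous_const continuous_re).mem_nhds ha))
      (fun z hz => norm_divBlaschke_le hf hM ha hfa hz) fun b hb => ⟨(hs b (by simp [hb])).1,
        divBlaschke_eq_zero hfa (hs b (by simp [hb])).2 (ne_of_mem_of_not_mem hb has)⟩
    have hfg : ‖f w‖ * ‖w + conj a‖ = ‖divBlaschke f a w‖ * ‖w - a‖ := by
      rw [← norm_mul, ← norm_mul, divBlaschke_mul_sub hfa w]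
    calc ‖f w‖ * ∏ b ∈ insert a s, ‖w + conj b‖
        = ‖w - a‖ * (‖divBlaschke f a w‖ * ∏ b ∈ s, ‖w + conj b‖) := by
          rw [Finset.prod_insert has, ← mul_assoc, hfg]; ring
      _ ≤ ‖w - a‖ * (M * ∏ b ∈ s, ‖w - b‖) := by gcongr
      _ = M * ∏ b ∈ insert a s, ‖w - b‖ := by rw [Finset.prod_insert has]; ring

theorem norm_le_mul_exp_neg_sum (hf : DifferentiableOn ℂ f {z | 0 < z.re})
    (hM : ∀ z, 0 < z.re → ‖f z‖ ≤ M) {s : Finset ℂ} (hs : ∀ a ∈ s, 0 < a.re ∧ f a = 0)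
    {w : ℂ} (hw : 0 < w.re) :
    ‖f w‖ ≤ M * Real.exp (-∑ a ∈ s, 2 * w.re * a.re / ‖w + conj a‖ ^ 2) := by
  have hP : 0 < ∏ a ∈ s, ‖w + conj a‖ :=
    Finset.prod_pos fun a ha => norm_add_conj_pos hw (hs a ha).1
  have hQ : ∏ a ∈ s, ‖w - a‖
      ≤ (∏ a ∈ s, ‖w + conj a‖) * Real.exp (-∑ a ∈ s, 2 * w.re * a.re / ‖w + conj a‖ ^ 2) := by
    rw [← Finset.sum_neg_distrib, Real.exp_sum, ← Finset.prod_mul_distrib]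
    exact Finset.prod_le_prod (fun _ _ => norm_nonneg _)
      fun a ha => norm_sub_le_norm_add_conj_mul_exp hw (hs a ha).1
  have hM0 : 0 ≤ M := (norm_nonneg _).trans (hM w hw)
  refine le_of_mul_le_mul_right ?_ hP
  calc ‖f w‖ * ∏ a ∈ s, ‖w + conj a‖ ≤ M * ∏ a ∈ s, ‖w - a‖ :=
        norm_mul_prod_le_of_eq_zero hf hM hs hw
    _ ≤ _ := by rw [mul_right_comm, mul_assoc]; gcongr

end BoundedHolomorphic

/-- Blaschke-type uniqueness theorem: a bounded analytic function on the right
half-plane which vanishes at pairwise distinct points `z n` with `inf |z n| > 0`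
and `∑ Re(1/z n) = ∞` vanishes identically. -/
theorem vanishes_of_blaschke (f : ℂ → ℂ)
    (hf : DifferentiableOn ℂ f {z : ℂ | 0 < z.re})
    (hbdd : ∃ M : ℝ, ∀ z : ℂ, 0 < z.re → ‖f z‖ ≤ M)
    (z : ℕ → ℂ) (hzre : ∀ n, 0 < (z n).re) (hinj : Function.Injective z)
    (hinf : ∃ δ : ℝ, 0 < δ ∧ ∀ n, δ ≤ ‖z n‖)
    (hsum : Tendsto (fun N => ∑ n ∈ Finset.range N, (1 / z n).re) atTop atTop)
    (hzero : ∀ n, f (z n) = 0) :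
    ∀ w : ℂ, 0 < w.re → f w = 0 := by
  intro w hw
  obtain ⟨M, hM⟩ := hbdd
  obtain ⟨δ, hδ, hδz⟩ := hinf
  set t : ℕ → ℝ := fun k => 2 * w.re * (z k).re / ‖w + conj (z k)‖ ^ 2
  have hbound (n : ℕ) : ‖f w‖ ≤ M * Real.exp (-∑ k ∈ Finset.range n, t k) := by
    simpa [Finset.sum_image hinj.injOn] using norm_le_mul_exp_neg_sum hf hM
      (s := (Finset.range n).image z) (by simp [hzre, hzero]) hw
  have ht : Tendsto (fun n => ∑ k ∈ Finset.range n, t k) atTop atTop := by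
    refine tendsto_atTop_mono (fun n => ?_) (hsum.const_mul_atTop (by positivity :
      0 < 2 * w.re / (1 + ‖w‖ / δ) ^ 2))
    rw [Finset.mul_sum]
    exact Finset.sum_le_sum fun k _ => mul_re_one_div_le_of_le_norm hw (hzre k) hδ (hδz k)
  have hlim : Tendsto (fun n => M * Real.exp (-∑ k ∈ Finset.range n, t k)) atTop (𝓝 0) := by
    simpa using (Real.tendsto_exp_atBot.comp (tendsto_neg_atTop_atBot.comp ht)).const_mul M
  exact norm_le_zero_iff.1 (ge_of_tendsto' hlim hbound)
end
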